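/- Let G be a simple graph with list chromatic number χ_ℓ and 1 ≤ r ≤ s ≤ χ_ℓ. Then λ_r(G) ≥ (1 − (1 − 1/s)^r) · λ_s(G). -/

import Mathlib

open SimpleGraph

/-- `c` properly colors each vertex of `S` from its list `L`. -/
def IsPartialListColoring {V : Type*} (G : SimpleGraph V) (L : V → Finset ℕ)
    (S : Set V) (c : V → ℕ) : Prop :=
  (∀ v ∈ S, c v ∈ L v) ∧ ∀ u ∈ S, ∀ v ∈ S, G.Adj u v → c u ≠ c v

/-- `λ_L(G)`: the maximum number of vertices properly colorable from the lists of `L`. -/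
noncomputable def lamL {V : Type*} (G : SimpleGraph V) (L : V → Finset ℕ) : ℕ :=
  sSup {k | ∃ (S : Finset V) (c : V → ℕ), S.card = k ∧ IsPartialListColoring G L S c}

/-- `λ_t(G)`: the minimum of `λ_L(G)` over all `t`-list assignments `L`. -/
noncomputable def lam {V : Type*} (G : SimpleGraph V) (t : ℕ) : ℕ :=
  sInf {m | ∃ L : V → Finset ℕ, (∀ v, (L v).card = t) ∧ lamL G L = m}

/-- `G` admits a full proper coloring from the lists of `L`. -/
def ListColorable {V : Type*} (G : SimpleGraph V) (L : V → Finset ℕ) : Prop :=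
  ∃ c : V → ℕ, (∀ v, c v ∈ L v) ∧ ∀ u v, G.Adj u v → c u ≠ c v

/-- The list chromatic number of `G`. -/
noncomputable def listChromaticNumber {V : Type*} (G : SimpleGraph V) : ℕ :=
  sInf {k | ∀ L : V → Finset ℕ, (∀ v, (L v).card = k) → ListColorable G L}

/-! Let `c₀` colour a largest set `S` that is colourable from the common palette
`{0, …, s - 1}`, so that `|S| ≥ λ_s(G)`, and let `L` be an `r`-list assignment. Send every colour
of `L` independently and uniformly into `{0, …, s - 1}` by a map `f`. A vertex `v ∈ S` is hit when
some colour of `L v` is sent to `c₀ v`, which happens with probability `1 - (1 - 1/s)^r`; the hit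
vertices are `L`-colourable (give `v` such a colour: adjacent vertices get colours with distinct
images under `f`), so there are at most `λ_L(G)` of them. Double counting the pairs
(hit vertex, map) gives `λ_s(G) (s^r - (s - 1)^r) ≤ s^r λ_L(G)`. -/

open Finset Fintype

section Counting

variable {ι : Type*} [Fintype ι] [DecidableEq ι]

theorem card_filter_piFinset_range_forall_ne {s a : ℕ} (ha : a < s) (A : Finset ι) :
    #{f ∈ piFinset fun _ : ι => range s | ∀ i ∈ A, f i ≠ a} =
      (s - 1) ^ #A * s ^ (card ι - #A) := by
  have hfilter : {f ∈ piFinset fun _ : ι => range s | ∀ i ∈ A, f i ≠ a} =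
      piFinset fun i => if i ∈ A then (range s).erase a else range s := by
    ext f
    simp only [mem_filter, mem_piFinset]
    constructor
    · rintro ⟨hf, hA⟩ i
      split_ifs with hi
      exacts [mem_erase.2 ⟨hA i hi, hf i⟩, hf i]
    · intro hf
      refine ⟨fun i => ?_, fun i hi => ?_⟩
      · have := hf i
        split_ifs at this
        exacts [mem_of_mem_erase this, this]
      · have := hf i
        rw [if_pos hi] at this
        exact (mem_erase.1 this).1
  rw [hfilter, card_piFinset]
  simp only [apply_ite card, card_erase_of_mem (mem_range.2 ha), card_range]
  rw [prod_ite, prod_const, prod_const, filter_mem_eq_inter, univ_inter, filter_not, card_sdiff]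
  simp

theorem card_filter_piFinset_range_exists_eq {s a : ℕ} (ha : a < s) (A : Finset ι) :
    #{f ∈ piFinset fun _ : ι => range s | ∃ i ∈ A, f i = a} =
      (s ^ #A - (s - 1) ^ #A) * s ^ (card ι - #A) := by
  have hsplit := card_filter_add_card_filter_not (s := piFinset fun _ : ι => range s)
    (fun f => ∃ i ∈ A, f i = a)
  simp only [not_exists, not_and] at hsplit
  rw [card_filter_piFinset_range_forall_ne ha, card_piFinset, prod_const, card_range, card_univ,
    ← Nat.add_sub_cancel' (card_le_univ A), pow_add, Nat.add_sub_cancel_left] at hsplit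
  rw [Nat.sub_mul]
  omega

end Counting

section ListColoring

variable {V : Type*} (G : SimpleGraph V)

theorem bddAbove_card_isPartialListColoring [Fintype V] (L : V → Finset ℕ) :
    BddAbove {k | ∃ (S : Finset V) (c : V → ℕ), #S = k ∧ IsPartialListColoring G L S c} :=
  ⟨card V, by rintro k ⟨S, -, rfl, -⟩; exact card_le_univ S⟩

theorem card_le_lamL [Fintype V] {L : V → Finset ℕ} {S : Finset V} {c : V → ℕ}
    (h : IsPartialListColoring G L S c) : #S ≤ lamL G L :=
  le_csSup (bddAbove_card_isPartialListColoring G L) ⟨S, c, rfl, h⟩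

theorem exists_isPartialListColoring_card_eq_lamL [Fintype V] (L : V → Finset ℕ) :
    ∃ (S : Finset V) (c : V → ℕ), #S = lamL G L ∧ IsPartialListColoring G L S c :=
  Nat.sSup_mem (s := {k | ∃ (S : Finset V) (c : V → ℕ), #S = k ∧ IsPartialListColoring G L S c})
    ⟨0, ∅, fun _ => 0, rfl, by simp [IsPartialListColoring]⟩
    (bddAbove_card_isPartialListColoring G L)

theorem lam_le_lamL {t : ℕ} {L : V → Finset ℕ} (hL : ∀ v, #(L v) = t) : lam G t ≤ lamL G L :=
  Nat.sInf_le ⟨L, hL, rfl⟩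

theorem exists_lamL_eq_lam (t : ℕ) : ∃ L : V → Finset ℕ, (∀ v, #(L v) = t) ∧ lamL G L = lam G t :=
  Nat.sInf_mem (s := {m | ∃ L : V → Finset ℕ, (∀ v, #(L v) = t) ∧ lamL G L = m})
    ⟨_, fun _ => range t, fun _ => card_range t, rfl⟩

theorem exists_isPartialListColoring_of_map_eq {L : V → Finset ℕ} {S : Set V} {c₀ : V → ℕ}
    (hc₀ : ∀ u ∈ S, ∀ v ∈ S, G.Adj u v → c₀ u ≠ c₀ v) (g : ℕ → ℕ)
    (hg : ∀ v ∈ S, ∃ c ∈ L v, g c = c₀ v) : ∃ c, IsPartialListColoring G L S c := by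
  choose! c hcL hcg using hg
  exact ⟨c, hcL, fun u hu v hv huv hc =>
    hc₀ u hu v hv huv (by rw [← hcg u hu, ← hcg v hv, hc])⟩

theorem card_mul_le_pow_mul_lamL [Fintype V] {s r : ℕ} {L : V → Finset ℕ}
    (hL : ∀ v, #(L v) = r) {C : Finset ℕ} (hLC : ∀ v, L v ⊆ C) {S : Finset V} {c₀ : V → ℕ}
    (hc₀s : ∀ v ∈ S, c₀ v < s) (hc₀ : ∀ u ∈ S, ∀ v ∈ S, G.Adj u v → c₀ u ≠ c₀ v) :
    #S * ((s ^ r - (s - 1) ^ r) * s ^ (#C - r)) ≤ s ^ #C * lamL G L := by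
  classical
  let A : V → Finset C := fun v => (L v).subtype (· ∈ C)
  have hA : ∀ v, #(A v) = r := fun v => by
    rw [Finset.card_subtype, filter_true_of_mem (hLC v), hL v]
  have := card_mul_le_card_mul (s := S) (t := piFinset fun _ : C => range s)
    (r := fun v f => ∃ i ∈ A v, f i = c₀ v) (m := (s ^ r - (s - 1) ^ r) * s ^ (#C - r))
    (n := lamL G L) ?_ ?_
  · simpa [card_piFinset] using this
  · intro v hv
    rw [bipartiteAbove, card_filter_piFinset_range_exists_eq (hc₀s v hv), hA v, card_coe]
  · intro f _
    obtain ⟨c, hc⟩ := exists_isPartialListColoring_of_map_eq G (L := L)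
      (S := ↑(S.bipartiteBelow (fun v f => ∃ i ∈ A v, f i = c₀ v) f))
      (fun u hu v hv => hc₀ u (filter_subset _ _ hu) v (filter_subset _ _ hv))
      (Function.extend Subtype.val f 0) fun v hv => by
        obtain ⟨i, hiA, hi⟩ := (mem_filter.1 hv).2
        exact ⟨i, mem_subtype.1 hiA, by rw [Subtype.val_injective.extend_apply, hi]⟩
    exact card_le_lamL G hc

theorem lam_mul_le_pow_mul_lamL [Fintype V] (s : ℕ) {r : ℕ} {L : V → Finset ℕ}
    (hL : ∀ v, #(L v) = r) : lam G s * (s ^ r - (s - 1) ^ r) ≤ s ^ r * lamL G L := by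
  obtain ⟨S, c₀, hS, hc₀L, hc₀⟩ := exists_isPartialListColoring_card_eq_lamL G fun _ => range s
  have hlam : lam G s ≤ #S := hS ▸ lam_le_lamL G fun _ => card_range s
  rcases S.eq_empty_or_nonempty with rfl | ⟨v₀, hv₀⟩
  · rw [Finset.card_empty, Nat.le_zero] at hlam
    simp [hlam]
  have hc₀s : ∀ v ∈ S, c₀ v < s := fun v hv => mem_range.1 (hc₀L v hv)
  have hLC : ∀ v, L v ⊆ univ.biUnion L := fun v => subset_biUnion_of_mem L (mem_univ v)
  have hrC : r ≤ #(univ.biUnion L) := hL v₀ ▸ card_le_card (hLC v₀)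
  have hpos : 0 < s ^ (#(univ.biUnion L) - r) := pow_pos ((Nat.zero_le _).trans_lt (hc₀s v₀ hv₀)) _
  calc lam G s * (s ^ r - (s - 1) ^ r)
      ≤ #S * (s ^ r - (s - 1) ^ r) := Nat.mul_le_mul_right _ hlam
    _ ≤ s ^ r * lamL G L := by
      refine Nat.le_of_mul_le_mul_right ?_ hpos
      calc #S * (s ^ r - (s - 1) ^ r) * s ^ (#(univ.biUnion L) - r)
          = #S * ((s ^ r - (s - 1) ^ r) * s ^ (#(univ.biUnion L) - r)) := mul_assoc _ _ _
        _ ≤ s ^ #(univ.biUnion L) * lamL G L := card_mul_le_pow_mul_lamL G hL hLC hc₀s hc₀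
        _ = s ^ r * lamL G L * s ^ (#(univ.biUnion L) - r) := by
          rw [mul_right_comm, ← pow_add, Nat.add_sub_cancel' hrC]

end ListColoring

theorem lam_ge_bound_of_lam_general {V : Type*} [Fintype V] (G : SimpleGraph V)
    (r s : ℕ) :
    (1 - (1 - 1 / (s : ℝ)) ^ r) * (lam G s : ℝ) ≤ (lam G r : ℝ) := by
  rcases Nat.eq_zero_or_pos s with rfl | hs
  · simp
  obtain ⟨L, hL, hLr⟩ := exists_lamL_eq_lam G r
  have key : lam G s * (s ^ r - (s - 1) ^ r) ≤ s ^ r * lam G r :=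
    hLr ▸ lam_mul_le_pow_mul_lamL G s hL
  have hcast : ((s ^ r - (s - 1) ^ r : ℕ) : ℝ) = (s : ℝ) ^ r - ((s : ℝ) - 1) ^ r := by
    rw [Nat.cast_sub (Nat.pow_le_pow_left (Nat.sub_le s 1) r)]
    push_cast [Nat.cast_sub hs]
    rfl
  have hbound : 1 - (1 - 1 / (s : ℝ)) ^ r = ((s : ℝ) ^ r - ((s : ℝ) - 1) ^ r) / (s : ℝ) ^ r := by
    rw [one_sub_div (by positivity), div_pow, one_sub_div (by positivity)]
  rw [hbound, div_mul_eq_mul_div, div_le_iff₀ (by positivity), ← hcast, mul_comm,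
    mul_comm _ (_ ^ r)]
  exact_mod_cast key

theorem lam_ge_bound_of_lam {V : Type*} [Fintype V] (G : SimpleGraph V)
    (r s : ℕ) (hr : 1 ≤ r) (hrs : r ≤ s) (hs : s ≤ listChromaticNumber G) :
    (1 - (1 - 1 / (s : ℝ)) ^ r) * (lam G s : ℝ) ≤ (lam G r : ℝ) :=
  lam_ge_bound_of_lam_general G r s
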